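/- arXiv:2504.01215 — 2 statements merged into one kernel-verified Lean document; each statement's English description precedes it below -/
import Mathlib

section
/- Let 1/√2 < r ≤ √3/2 and β ∈ (0, π). Set g = 5 − 10r² + 6r⁴ + 4(2r²−1)(r²−1)cos β − 2r²(1−r²)cos 2β (which is positive), C = 2(3r²−2)(r²−1) + 4(2r²−1)(r²−1)cos β + (2r⁴−2r²+1)cos 2β, and D = 2 sin β·(2(r²−1) + (2r²−1)cos β). Then there exists φ ∈ (0, π) satisfying sin φ = −D/g and cos φ = −C/g, and for this φ the matrix identity R_L(φ)·R_R(π−β)·R_L(π−β)·R_R(φ) = R_L(π)·R_R(π+β)·R_L(π+β)·R_R(π) holds. Consequently the path L_φ R_{π−β} L_{π−β} R_φ connects the same initial and final configurations as the path L_π R_{π+β} L_{π+β} R_π and has strictly smaller length: r(2φ + 2(π−β)) < r(2π + 2(π+β)). (This is the core of the proof that a non-trivial CCCCCC path is non-optimal for r ≤ √3/2.) -/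
open Real

noncomputable def OmegaL (r : ℝ) : Matrix (Fin 3) (Fin 3) ℝ :=
  !![0, -r, 0; r, 0, -Real.sqrt (1 - r ^ 2); 0, Real.sqrt (1 - r ^ 2), 0]

noncomputable def OmegaR (r : ℝ) : Matrix (Fin 3) (Fin 3) ℝ :=
  !![0, -r, 0; r, 0, Real.sqrt (1 - r ^ 2); 0, -Real.sqrt (1 - r ^ 2), 0]

noncomputable def OmegaG : Matrix (Fin 3) (Fin 3) ℝ :=
  !![0, -1, 0; 1, 0, 0; 0, 0, 0]

/-- Rotation matrix of a left turn of radius `r` and arc angle `φ`. -/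
noncomputable def RL (r φ : ℝ) : Matrix (Fin 3) (Fin 3) ℝ := NormedSpace.exp (φ • OmegaL r)

/-- Rotation matrix of a right turn of radius `r` and arc angle `φ`. -/
noncomputable def RR (r φ : ℝ) : Matrix (Fin 3) (Fin 3) ℝ := NormedSpace.exp (φ • OmegaR r)

/-- Rotation matrix of a great-circle arc of angle `φ`. -/
noncomputable def RG (φ : ℝ) : Matrix (Fin 3) (Fin 3) ℝ := NormedSpace.exp (φ • OmegaG)

/-!
Each turn matrix is `exp (θ • Ω)` with `Ω * Ω * Ω = -Ω`, so Rodrigues' formula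
`exp (θ • Ω) = 1 + sin θ • Ω + (1 - cos θ) • Ω ^ 2` makes it affine in `(sin θ, cos θ)`.
With `a = π - β`, the group law and `2π`-periodicity reduce the matrix identity to
`RL (φ - π) * (RR a * RL a) = RR (-a) * RL (-a) * RR (π - φ)`, whose two sides are affine in
`(sin φ, cos φ) = (-D / g, -C / g)`; multiplied by `g` it becomes a polynomial identity in
`r`, `√(1 - r²)`, `sin β`, `cos β`. The angle `φ ∈ (0, π)` exists because `C² + D² = g²` and
`D < 0`.
-/

open NormedSpace

section Rodrigues

variable {𝔸 : Type*}

def rodrigues [Ring 𝔸] [Algebra ℝ 𝔸] (A : 𝔸) (s c : ℝ) : 𝔸 := 1 + s • A + (1 - c) • (A * A)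

theorem smul_rodrigues [Ring 𝔸] [Algebra ℝ 𝔸] (A : 𝔸) (w s c : ℝ) :
    w • rodrigues A s c = w • 1 + (w * s) • A + (w - w * c) • (A * A) := by
  simp only [rodrigues, smul_add, smul_smul, mul_sub, mul_one]

variable [NormedRing 𝔸] [NormedAlgebra ℝ 𝔸]

theorem hasDerivAt_rodrigues_sin_cos (A : 𝔸) (u : ℝ) :
    HasDerivAt (fun u : ℝ ↦ rodrigues A (sin u) (cos u)) (cos u • A + sin u • (A * A)) u := by
  simp only [rodrigues]
  exact (((hasDerivAt_const u (1 : 𝔸)).add ((hasDerivAt_sin u).smul_const A)).add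
    (((hasDerivAt_cos u).const_sub 1).smul_const (A * A))).congr_deriv (by simp)

variable [CompleteSpace 𝔸]

theorem exp_smul_mul_exp_smul_neg (A : 𝔸) (t : ℝ) :
    exp (t • A) * exp (t • -A) = 1 := by
  have hd (u : ℝ) : HasDerivAt (fun u : ℝ ↦ exp (u • A) * exp (u • -A)) 0 u := by
    convert (hasDerivAt_exp_smul_const A u).fun_mul (hasDerivAt_exp_smul_const' (-A) u) using 1
    simp [mul_assoc]
  simpa using is_const_of_deriv_eq_zero (fun u ↦ (hd u).differentiableAt) (fun u ↦ (hd u).deriv) t 0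

theorem exp_smul_eq_rodrigues {A : 𝔸} (hA : A * A * A = -A) (t : ℝ) :
    exp (t • A) = rodrigues A (sin t) (cos t) := by
  have hd (u : ℝ) : HasDerivAt (fun u : ℝ ↦ exp (u • -A) * rodrigues A (sin u) (cos u)) 0 u := by
    convert (hasDerivAt_exp_smul_const (-A) u).fun_mul (hasDerivAt_rodrigues_sin_cos A u) using 1
    -- `u ↦ rodrigues A (sin u) (cos u)` solves the same equation `Y' = A Y` as `u ↦ exp (u • A)`
    have hAR : -A * rodrigues A (sin u) (cos u) + (cos u • A + sin u • (A * A)) = 0 := by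
      simp only [rodrigues, mul_add, mul_one, neg_mul, mul_smul_comm, ← mul_assoc, hA]
      module
    rw [mul_assoc, ← mul_add, hAR, mul_zero]
  have h : exp (t • -A) * rodrigues A (sin t) (cos t) = 1 := by
    rw [is_const_of_deriv_eq_zero (fun u ↦ (hd u).differentiableAt) (fun u ↦ (hd u).deriv) t 0]
    simp [rodrigues]
  calc exp (t • A) = exp (t • A) * (exp (t • -A) * rodrigues A (sin t) (cos t)) := by
        rw [h, mul_one]
    _ = rodrigues A (sin t) (cos t) := by rw [← mul_assoc, exp_smul_mul_exp_smul_neg, one_mul]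

end Rodrigues

theorem Matrix.exp_add_smul {n : Type*} [Fintype n] [DecidableEq n] (A : Matrix n n ℝ) (a b : ℝ) :
    exp ((a + b) • A) = exp (a • A) * exp (b • A) := by
  rw [add_smul, Matrix.exp_add_of_commute _ _ (((Commute.refl A).smul_left a).smul_right b)]

section Turns

variable {r : ℝ}

theorem RL_add (a b : ℝ) : RL r (a + b) = RL r a * RL r b := Matrix.exp_add_smul _ a b

theorem RR_add (a b : ℝ) : RR r (a + b) = RR r a * RR r b := Matrix.exp_add_smul _ a b

theorem RR_zero : RR r 0 = 1 := by simp [RR]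

theorem OmegaL_mul_self_mul_self (hr : r ^ 2 ≤ 1) : OmegaL r * OmegaL r * OmegaL r = -OmegaL r := by
  have hq := Real.sq_sqrt (sub_nonneg.mpr hr)
  ext i j
  fin_cases i <;> fin_cases j <;> simp [OmegaL, Matrix.mul_apply, Fin.sum_univ_three] <;> grind

theorem OmegaR_mul_self_mul_self (hr : r ^ 2 ≤ 1) : OmegaR r * OmegaR r * OmegaR r = -OmegaR r := by
  have hq := Real.sq_sqrt (sub_nonneg.mpr hr)
  ext i j
  fin_cases i <;> fin_cases j <;> simp [OmegaR, Matrix.mul_apply, Fin.sum_univ_three] <;> grind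

attribute [local instance] Matrix.linftyOpNormedRing Matrix.linftyOpNormedAlgebra

theorem RL_eq_rodrigues (hr : r ^ 2 ≤ 1) (θ : ℝ) : RL r θ = rodrigues (OmegaL r) (sin θ) (cos θ) :=
  exp_smul_eq_rodrigues (OmegaL_mul_self_mul_self hr) θ

theorem RR_eq_rodrigues (hr : r ^ 2 ≤ 1) (θ : ℝ) : RR r θ = rodrigues (OmegaR r) (sin θ) (cos θ) :=
  exp_smul_eq_rodrigues (OmegaR_mul_self_mul_self hr) θ

theorem RL_add_two_pi (hr : r ^ 2 ≤ 1) (θ : ℝ) : RL r (θ + 2 * π) = RL r θ := by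
  rw [RL_eq_rodrigues hr, RL_eq_rodrigues hr, sin_add_two_pi, cos_add_two_pi]

theorem RR_add_two_pi (hr : r ^ 2 ≤ 1) (θ : ℝ) : RR r (θ + 2 * π) = RR r θ := by
  rw [RR_eq_rodrigues hr, RR_eq_rodrigues hr, sin_add_two_pi, cos_add_two_pi]

end Turns

namespace Shortcut

noncomputable def g (r β : ℝ) : ℝ :=
  5 - 10 * r ^ 2 + 6 * r ^ 4 + 4 * (2 * r ^ 2 - 1) * (r ^ 2 - 1) * Real.cos β -
    2 * r ^ 2 * (1 - r ^ 2) * Real.cos (2 * β)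

noncomputable def C (r β : ℝ) : ℝ :=
  2 * (3 * r ^ 2 - 2) * (r ^ 2 - 1) + 4 * (2 * r ^ 2 - 1) * (r ^ 2 - 1) * Real.cos β +
    (2 * r ^ 4 - 2 * r ^ 2 + 1) * Real.cos (2 * β)

noncomputable def D (r β : ℝ) : ℝ :=
  2 * Real.sin β * (2 * (r ^ 2 - 1) + (2 * r ^ 2 - 1) * Real.cos β)

variable {r β : ℝ}

theorem g_eq (r β : ℝ) : g r β = (1 - cos β) / 2 + (1 + cos β) * (3 - 4 * r ^ 2) ^ 2 / 2 +
    4 * r ^ 2 * (1 - r ^ 2) * ((1 - cos β) * (1 + cos β)) := by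
  rw [g, cos_two_mul]; ring

theorem g_pos (hr : r ^ 2 ≤ 1) (hβ : cos β < 1) : 0 < g r β := by
  have hcos : 0 ≤ 1 + cos β := by linarith [neg_one_le_cos β]
  have := mul_nonneg hcos (sq_nonneg (3 - 4 * r ^ 2))
  have := mul_nonneg (mul_nonneg (sq_nonneg r) (sub_nonneg.mpr hr))
    (mul_nonneg (sub_nonneg.mpr hβ.le) hcos)
  rw [g_eq]
  linarith

theorem C_sq_add_D_sq (r β : ℝ) : C r β ^ 2 + D r β ^ 2 = g r β ^ 2 := by
  rw [C, D, g, cos_two_mul]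
  linear_combination 4 * (2 + cos β - 2 * r ^ 2 * (1 + cos β)) ^ 2 * sin_sq_add_cos_sq β

theorem D_neg (hr : 1 / 2 < r ^ 2) (hr' : r ^ 2 ≤ 3 / 4) (hsin : 0 < sin β) (hcos : cos β < 1) :
    D r β < 0 := by
  have : 0 < (2 * r ^ 2 - 1) * (1 - cos β) := mul_pos (by linarith) (by linarith)
  rw [D]
  nlinarith

theorem rodrigues_identity (hr : r ^ 2 ≤ 1) (β : ℝ) :
    (g r β • 1 + D r β • OmegaL r + (g r β - C r β) • (OmegaL r * OmegaL r)) *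
      (rodrigues (OmegaR r) (sin β) (-cos β) * rodrigues (OmegaL r) (sin β) (-cos β)) =
    rodrigues (OmegaR r) (-sin β) (-cos β) * rodrigues (OmegaL r) (-sin β) (-cos β) *
      (g r β • 1 - D r β • OmegaR r + (g r β - C r β) • (OmegaR r * OmegaR r)) := by
  have hq := Real.sq_sqrt (sub_nonneg.mpr hr)
  have hβ := sin_sq_add_cos_sq β
  ext i j
  fin_cases i <;> fin_cases j <;>
    simp [g, C, D, cos_two_mul, rodrigues, OmegaL, OmegaR, Matrix.mul_apply, Fin.sum_univ_three,
      Matrix.one_apply] <;>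
    grind

theorem RL_mul_RR_mul_RL_mul_RR_eq (hr : r ^ 2 ≤ 1) {β φ : ℝ} (hg : g r β ≠ 0)
    (hsin : sin φ = -D r β / g r β) (hcos : cos φ = -C r β / g r β) :
    RL r φ * RR r (π - β) * RL r (π - β) * RR r φ =
      RL r π * RR r (π + β) * RL r (π + β) * RR r π := by
  have hgs : g r β * sin φ = -D r β := by rw [hsin]; field_simp
  have hgc : g r β * cos φ = -C r β := by rw [hcos]; field_simp
  have hL : g r β • RL r (φ - π) =
      g r β • 1 + D r β • OmegaL r + (g r β - C r β) • (OmegaL r * OmegaL r) := by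
    rw [RL_eq_rodrigues hr, smul_rodrigues, sin_sub_pi, cos_sub_pi, mul_neg, mul_neg, hgs, hgc,
      neg_neg, neg_neg]
  have hR : g r β • RR r (π - φ) =
      g r β • 1 - D r β • OmegaR r + (g r β - C r β) • (OmegaR r * OmegaR r) := by
    rw [RR_eq_rodrigues hr, smul_rodrigues, sin_pi_sub, cos_pi_sub, mul_neg, hgs, hgc, neg_neg,
      neg_smul, ← sub_eq_add_neg]
  have hconj : RL r (φ - π) * (RR r (π - β) * RL r (π - β)) =
      RR r (β - π) * RL r (β - π) * RR r (π - φ) := by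
    refine smul_right_injective _ hg ?_
    dsimp only
    rw [← smul_mul_assoc, ← mul_smul_comm, hL, hR, RL_eq_rodrigues hr, RR_eq_rodrigues hr,
      RL_eq_rodrigues hr, RR_eq_rodrigues hr, sin_pi_sub, cos_pi_sub, sin_sub_pi, cos_sub_pi]
    exact rodrigues_identity hr β
  have hφL : RL r φ = RL r π * RL r (φ - π) := by rw [← RL_add, add_sub_cancel]
  have hφR : RR r φ = RR r (φ - π) * RR r π := by rw [← RR_add, sub_add_cancel]
  calc RL r φ * RR r (π - β) * RL r (π - β) * RR r φ
      = RL r π * (RL r (φ - π) * (RR r (π - β) * RL r (π - β))) * RR r (φ - π) * RR r π := by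
        rw [hφL, hφR]; simp only [mul_assoc]
    _ = RL r π * (RR r (β - π) * RL r (β - π)) * (RR r (π - φ) * RR r (φ - π)) * RR r π := by
        rw [hconj]; simp only [mul_assoc]
    _ = RL r π * RR r (π + β) * RL r (π + β) * RR r π := by
        rw [← RR_add, sub_add_sub_cancel, sub_self, RR_zero, mul_one,
          show π + β = β - π + 2 * π by ring, RL_add_two_pi hr, RR_add_two_pi hr]
        simp only [mul_assoc]

end Shortcut

theorem exists_mem_Ioo_sin_cos_eq {x y : ℝ} (h : x ^ 2 + y ^ 2 = 1) (hy : 0 < y) :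
    ∃ φ ∈ Set.Ioo 0 π, sin φ = y ∧ cos φ = x := by
  have hx : -1 < x ∧ x < 1 := by constructor <;> nlinarith
  refine ⟨arccos x, ⟨arccos_pos.2 hx.2, arccos_lt_pi.2 hx.1⟩, ?_, cos_arccos hx.1.le hx.2.le⟩
  rw [sin_arccos, show 1 - x ^ 2 = y ^ 2 by linarith, sqrt_sq hy.le]

theorem stmt_1 (r β : ℝ) (hr : 1 / Real.sqrt 2 < r) (hr' : r ≤ Real.sqrt 3 / 2)
    (hβ : β ∈ Set.Ioo (0 : ℝ) Real.pi)
    (g C D : ℝ)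
    (hg : g = 5 - 10 * r ^ 2 + 6 * r ^ 4 + 4 * (2 * r ^ 2 - 1) * (r ^ 2 - 1) * Real.cos β -
      2 * r ^ 2 * (1 - r ^ 2) * Real.cos (2 * β))
    (hC : C = 2 * (3 * r ^ 2 - 2) * (r ^ 2 - 1) +
      4 * (2 * r ^ 2 - 1) * (r ^ 2 - 1) * Real.cos β +
      (2 * r ^ 4 - 2 * r ^ 2 + 1) * Real.cos (2 * β))
    (hD : D = 2 * Real.sin β * (2 * (r ^ 2 - 1) + (2 * r ^ 2 - 1) * Real.cos β)) :
    0 < g ∧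
    ∃ φ ∈ Set.Ioo (0 : ℝ) Real.pi,
      Real.sin φ = -D / g ∧ Real.cos φ = -C / g ∧
      RL r φ * RR r (Real.pi - β) * RL r (Real.pi - β) * RR r φ =
        RL r Real.pi * RR r (Real.pi + β) * RL r (Real.pi + β) * RR r Real.pi ∧
      r * (2 * φ + 2 * (Real.pi - β)) < r * (2 * Real.pi + 2 * (Real.pi + β)) := by
  obtain rfl : g = Shortcut.g r β := hg
  obtain rfl : C = Shortcut.C r β := hC
  obtain rfl : D = Shortcut.D r β := hD
  have hr0 : 0 < r := lt_trans (by positivity) hr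
  have hr2 : 1 / 2 < r ^ 2 := by
    simpa [div_pow] using pow_lt_pow_left₀ hr (by positivity) two_ne_zero
  have hr3 : r ^ 2 ≤ 3 / 4 := by nlinarith [sq_sqrt (show (0 : ℝ) ≤ 3 by norm_num)]
  have hsinβ : 0 < sin β := sin_pos_of_pos_of_lt_pi hβ.1 hβ.2
  have hcosβ : cos β < 1 := by simpa using cos_lt_cos_of_nonneg_of_le_pi le_rfl hβ.2.le hβ.1
  have hg : 0 < Shortcut.g r β := Shortcut.g_pos (by linarith) hcosβ
  obtain ⟨φ, hφ, hsin, hcos⟩ := exists_mem_Ioo_sin_cos_eq (x := -Shortcut.C r β / Shortcut.g r β)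
    (y := -Shortcut.D r β / Shortcut.g r β)
    (by field_simp; linear_combination Shortcut.C_sq_add_D_sq r β)
    (div_pos (neg_pos.2 (Shortcut.D_neg hr2 hr3 hsinβ hcosβ)) hg)
  refine ⟨hg, φ, hφ, hsin, hcos,
    Shortcut.RL_mul_RR_mul_RL_mul_RR_eq (by linarith) hg.ne' hsin hcos, ?_⟩
  exact mul_lt_mul_of_pos_left (by linarith [hφ.2, hβ.1]) hr0
end

section
/- Let 1/√2 < r ≤ √3/2 and β ∈ (0, π). Set g = 5 − 10r² + 6r⁴ + 4(2r²−1)(r²−1)cos β − 2r²(1−r²)cos 2β, C = 2(3r²−2)(r²−1) + 4(2r²−1)(r²−1)cos β + (2r⁴−2r²+1)cos 2β, D = 2 sin β·(2(r²−1) + (2r²−1)cos β), and let φ ∈ ℝ satisfy sin φ = −D/g and cos φ = −C/g. Then the (2,3) entry of the product R_L(φ)·R_R(π−β)·R_L(π−β)·R_R(φ) equals 2r²·√(1−r²)·(4r²−3+(4r²−1)cos β) sin β, which is the (2,3) entry of R_L(π)·R_R(π+β)·R_L(π+β)·R_R(π). -/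
open Real

/-!
Both turns rotate about unit axes: `Ω_L` and `Ω_R` are the cross-product matrices of
`(±√(1 - r²), 0, r)`, so Rodrigues' formula gives `R_L` and `R_R` in closed form. With
`a = 1 + (1 - 2r²)(1 - cos ψ)`, the `(2,3)` entry of `R_L(φ) R_R(ψ) R_L(ψ) R_R(φ)` then factors as
`2r²√(1 - r²) (a sin φ + sin ψ cos φ) (a cos φ - sin ψ sin φ - 1 + 2r²(1 - cos ψ))`.
For `ψ = π ∓ β` the number `a` is the same, and `g = a² + sin²β`, `C = a² - sin²β`,
`D = -2a sin β`. Hence `a sin φ + sin ψ cos φ = sin β` and `a cos φ - sin ψ sin φ = -a`, both for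
the prescribed `φ` with `ψ = π - β` and for `φ = π` with `ψ = π + β`.
-/

section Rodrigues

variable {A : Type*} [Ring A] [Algebra ℝ A]

theorem pow_two_mul_add_one_of_pow_three_eq_neg {X : A} (hX : X ^ 3 = -X) (k : ℕ) :
    X ^ (2 * k + 1) = (-1 : ℝ) ^ k • X := by
  induction k with
  | zero => simp
  | succ k ih =>
    rw [show 2 * (k + 1) + 1 = 2 * k + 1 + 2 by ring, pow_add, ih, smul_mul_assoc,
      ← pow_succ' X 2, hX, pow_succ, mul_smul, neg_one_smul, smul_neg]

theorem pow_two_mul_add_two_of_pow_three_eq_neg {X : A} (hX : X ^ 3 = -X) (k : ℕ) :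
    X ^ (2 * k + 2) = (-1 : ℝ) ^ k • X ^ 2 := by
  rw [pow_succ, pow_two_mul_add_one_of_pow_three_eq_neg hX, smul_mul_assoc, ← pow_two]

variable [TopologicalSpace A] [IsTopologicalRing A] [ContinuousSMul ℝ A] [T2Space A]

theorem exp_smul_of_pow_three_eq_neg {X : A} (hX : X ^ 3 = -X) (t : ℝ) :
    NormedSpace.exp (t • X) = 1 + sin t • X + (1 - cos t) • X ^ 2 := by
  let f (n : ℕ) : A := ((n.factorial : ℝ)⁻¹ * t ^ n) • X ^ n
  have hodd : HasSum (fun k => f (2 * k + 1)) (sin t • X) := by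
    convert (Real.hasSum_sin t).smul_const X using 2 with k
    simp only [f, pow_two_mul_add_one_of_pow_three_eq_neg hX, smul_smul]
    ring_nf
  have heven : HasSum (fun k => f (2 * k)) (1 + (1 - cos t) • X ^ 2) := by
    rw [← hasSum_nat_add_iff' 1]
    convert ((hasSum_nat_add_iff' 1).mpr (Real.hasSum_cos t)).smul_const (X ^ 2) |>.neg
      using 2 with k
    · simp only [f, mul_add, mul_one, pow_two_mul_add_two_of_pow_three_eq_neg hX, smul_smul]
      rw [← neg_smul]
      ring_nf
    · simp only [Finset.sum_range_one, f, mul_zero, pow_zero, Nat.factorial_zero, Nat.cast_one,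
        inv_one, one_mul, div_one]
      module
  rw [NormedSpace.exp_eq_tsum ℝ]
  simp only [smul_pow, smul_smul]
  rw [(heven.even_add_odd hodd).tsum_eq]
  abel

end Rodrigues

section CrossMatrix

variable {R : Type*} [CommRing R]

def crossMatrix (a b c : R) : Matrix (Fin 3) (Fin 3) R :=
  !![0, -c, b; c, 0, -a; -b, a, 0]

theorem crossMatrix_sq (a b c : R) :
    crossMatrix a b c ^ 2 =
      !![-(b ^ 2 + c ^ 2), a * b, a * c; a * b, -(a ^ 2 + c ^ 2), b * c;
        a * c, b * c, -(a ^ 2 + b ^ 2)] := by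
  rw [sq, crossMatrix, Matrix.mul_fin_three]
  ring_nf

theorem crossMatrix_pow_three (a b c : R) :
    crossMatrix a b c ^ 3 = -(a ^ 2 + b ^ 2 + c ^ 2) • crossMatrix a b c := by
  rw [pow_succ, crossMatrix_sq, crossMatrix, Matrix.mul_fin_three]
  simp only [Matrix.smul_of, Matrix.smul_cons, Matrix.smul_empty, smul_eq_mul]
  ring_nf

end CrossMatrix

theorem exp_smul_crossMatrix {a b c : ℝ} (h : a ^ 2 + b ^ 2 + c ^ 2 = 1) (t : ℝ) :
    NormedSpace.exp (t • crossMatrix a b c) =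
      !![cos t + (1 - cos t) * a ^ 2, (1 - cos t) * a * b - sin t * c,
          (1 - cos t) * a * c + sin t * b;
        (1 - cos t) * a * b + sin t * c, cos t + (1 - cos t) * b ^ 2,
          (1 - cos t) * b * c - sin t * a;
        (1 - cos t) * a * c - sin t * b, (1 - cos t) * b * c + sin t * a,
          cos t + (1 - cos t) * c ^ 2] := by
  have hcube : crossMatrix a b c ^ 3 = -crossMatrix a b c := by
    rw [crossMatrix_pow_three, h, neg_one_smul]
  rw [exp_smul_of_pow_three_eq_neg hcube, crossMatrix_sq]
  ext i j
  fin_cases i <;> fin_cases j <;> simp [crossMatrix] <;>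
    first | ring1 | linear_combination (cos t - 1) * h

theorem OmegaL_eq_crossMatrix (r : ℝ) : OmegaL r = crossMatrix (√(1 - r ^ 2)) 0 r := by
  rw [OmegaL, crossMatrix, neg_zero]

theorem OmegaR_eq_crossMatrix (r : ℝ) : OmegaR r = crossMatrix (-√(1 - r ^ 2)) 0 r := by
  rw [OmegaR, crossMatrix, neg_neg, neg_zero]

theorem RL_mul_RR_mul_RL_mul_RR_apply_one_two {r : ℝ} (hr : r ^ 2 ≤ 1) (φ ψ a : ℝ)
    (ha : a = 1 + (1 - 2 * r ^ 2) * (1 - cos ψ)) :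
    (RL r φ * RR r ψ * RL r ψ * RR r φ) 1 2 =
      2 * r ^ 2 * √(1 - r ^ 2) * (a * sin φ + sin ψ * cos φ) *
        (a * cos φ - sin ψ * sin φ - (1 - 2 * r ^ 2 * (1 - cos ψ))) := by
  have hq : √(1 - r ^ 2) ^ 2 = 1 - r ^ 2 := sq_sqrt (by linarith)
  have hL : √(1 - r ^ 2) ^ 2 + 0 ^ 2 + r ^ 2 = 1 := by rw [hq]; ring
  have hR : (-√(1 - r ^ 2)) ^ 2 + 0 ^ 2 + r ^ 2 = 1 := by rw [neg_sq, hq]; ring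
  simp only [RL, RR, OmegaL_eq_crossMatrix, OmegaR_eq_crossMatrix, exp_smul_crossMatrix hL,
    exp_smul_crossMatrix hR]
  simp only [Matrix.mul_apply, Fin.sum_univ_three, Matrix.of_apply, Matrix.cons_val_zero,
    Matrix.cons_val_one, Matrix.cons_val_two, Matrix.head_cons, Matrix.tail_cons]
  have hψ := sin_sq_add_cos_sq ψ
  subst ha
  grind

theorem mul_sin_add_mul_cos_of_sin_eq_of_cos_eq {a b g φ : ℝ} (hg : g = a ^ 2 + b ^ 2)
    (hs : sin φ = 2 * a * b / g) (hc : cos φ = (b ^ 2 - a ^ 2) / g) :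
    a * sin φ + b * cos φ = b ∧ a * cos φ - b * sin φ = -a := by
  have hg0 : g ≠ 0 := by
    rintro rfl
    simpa [hs, hc] using sin_sq_add_cos_sq φ
  rw [hs, hc]
  constructor
  · field_simp
    linear_combination -b * hg
  · field_simp
    linear_combination a * hg

theorem stmt_17_general (r β φ : ℝ) (hr : 1 / Real.sqrt 2 < r) (hr' : r ≤ Real.sqrt 3 / 2)
    (g C D : ℝ)
    (hg : g = 5 - 10 * r ^ 2 + 6 * r ^ 4 + 4 * (2 * r ^ 2 - 1) * (r ^ 2 - 1) * Real.cos β -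
      2 * r ^ 2 * (1 - r ^ 2) * Real.cos (2 * β))
    (hC : C = 2 * (3 * r ^ 2 - 2) * (r ^ 2 - 1) +
      4 * (2 * r ^ 2 - 1) * (r ^ 2 - 1) * Real.cos β +
      (2 * r ^ 4 - 2 * r ^ 2 + 1) * Real.cos (2 * β))
    (hD : D = 2 * Real.sin β * (2 * (r ^ 2 - 1) + (2 * r ^ 2 - 1) * Real.cos β))
    (hsin : Real.sin φ = -D / g) (hcos : Real.cos φ = -C / g) :
    (RL r φ * RR r (Real.pi - β) * RL r (Real.pi - β) * RR r φ) 1 2 =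
      2 * r ^ 2 * Real.sqrt (1 - r ^ 2) * (4 * r ^ 2 - 3 + (4 * r ^ 2 - 1) * Real.cos β) *
        Real.sin β ∧
    (RL r Real.pi * RR r (Real.pi + β) * RL r (Real.pi + β) * RR r Real.pi) 1 2 =
      2 * r ^ 2 * Real.sqrt (1 - r ^ 2) * (4 * r ^ 2 - 3 + (4 * r ^ 2 - 1) * Real.cos β) *
        Real.sin β := by
  have hr1 : r ^ 2 ≤ 1 := by
    have h : r ^ 2 ≤ (√3 / 2) ^ 2 := pow_le_pow_left₀ (le_trans (by positivity) hr.le) hr' 2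
    rw [div_pow, sq_sqrt (by norm_num)] at h
    linarith
  have hpyth := sin_sq_add_cos_sq β
  set a := 1 + (1 - 2 * r ^ 2) * (1 + cos β) with ha
  obtain ⟨hA, hB⟩ := mul_sin_add_mul_cos_of_sin_eq_of_cos_eq (a := a) (b := sin β) (g := g)
    (by rw [hg, ha, cos_two_mul]; linear_combination -hpyth)
    (by rw [hsin, hD, ha]; ring)
    (by rw [hcos, hC, ha, cos_two_mul]; congr 1; linear_combination -hpyth)
  constructor
  · rw [RL_mul_RR_mul_RL_mul_RR_apply_one_two hr1 φ (π - β) a (by rw [ha, cos_pi_sub]; ring),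
      sin_pi_sub, cos_pi_sub, hA, hB, ha]
    ring
  · rw [add_comm π β,
      RL_mul_RR_mul_RL_mul_RR_apply_one_two hr1 π (β + π) a (by rw [ha, cos_add_pi]; ring),
      sin_add_pi, cos_add_pi, sin_pi, cos_pi, ha]
    ring

theorem stmt_17 (r β φ : ℝ) (hr : 1 / Real.sqrt 2 < r) (hr' : r ≤ Real.sqrt 3 / 2)
    (hβ : β ∈ Set.Ioo (0 : ℝ) Real.pi)
    (g C D : ℝ)
    (hg : g = 5 - 10 * r ^ 2 + 6 * r ^ 4 + 4 * (2 * r ^ 2 - 1) * (r ^ 2 - 1) * Real.cos β -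
      2 * r ^ 2 * (1 - r ^ 2) * Real.cos (2 * β))
    (hC : C = 2 * (3 * r ^ 2 - 2) * (r ^ 2 - 1) +
      4 * (2 * r ^ 2 - 1) * (r ^ 2 - 1) * Real.cos β +
      (2 * r ^ 4 - 2 * r ^ 2 + 1) * Real.cos (2 * β))
    (hD : D = 2 * Real.sin β * (2 * (r ^ 2 - 1) + (2 * r ^ 2 - 1) * Real.cos β))
    (hsin : Real.sin φ = -D / g) (hcos : Real.cos φ = -C / g) :
    (RL r φ * RR r (Real.pi - β) * RL r (Real.pi - β) * RR r φ) 1 2 =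
      2 * r ^ 2 * Real.sqrt (1 - r ^ 2) * (4 * r ^ 2 - 3 + (4 * r ^ 2 - 1) * Real.cos β) *
        Real.sin β ∧
    (RL r Real.pi * RR r (Real.pi + β) * RL r (Real.pi + β) * RR r Real.pi) 1 2 =
      2 * r ^ 2 * Real.sqrt (1 - r ^ 2) * (4 * r ^ 2 - 3 + (4 * r ^ 2 - 1) * Real.cos β) *
        Real.sin β :=
  stmt_17_general r β φ hr hr' g C D hg hC hD hsin hcos
end
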